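/- For every natural number n, as an identity of real numbers, b_n = (n!/√3) · ((1+√3)^{n+1} − (1−√3)^{n+1}) / 2^{n+1}. -/

import Mathlib

/-- A barred permutation of `[n]`: an ordered set partition of `Fin n` into
blocks of size 1 or 2, encoded as a list of pairwise disjoint subsets whose
union is everything. -/
def IsBarredPermutation {n : ℕ} (L : List (Finset (Fin n))) : Prop :=
  L.Pairwise Disjoint ∧ (∀ B ∈ L, B.card = 1 ∨ B.card = 2) ∧
    L.foldr (· ∪ ·) ∅ = Finset.univ

/-- `barredCount n` is the number of barred permutations of `[n]`. -/
noncomputable def barredCount (n : ℕ) : ℕ :=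
  Nat.card { L : List (Finset (Fin n)) // IsBarredPermutation L }

/-!
Removing the first block of a barred permutation of a set of size `n + 2` leaves a barred
permutation of the remaining `n + 1` or `n` elements, so
`b (n + 2) = (n + 2) * b (n + 1) + (n + 2).choose 2 * b n` with `b 0 = b 1 = 1`; this is why
barred permutations are set up over an arbitrary finite ground set. Hence `a n = b n / n!`
satisfies `a (n + 2) = a (n + 1) + a n / 2`, whose characteristic roots are `(1 ± √3) / 2`,
and Binet's formula finishes the proof.
-/

open Finset

variable {α : Type*} [DecidableEq α]

namespace Finset

theorem disjoint_foldr_union_right {B : Finset α} {L : List (Finset α)} :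
    Disjoint B (L.foldr (· ∪ ·) ∅) ↔ ∀ C ∈ L, Disjoint B C := by
  induction L with
  | nil => simp
  | cons C T ih => simp [ih]

theorem disjoint_and_union_eq_iff {B U s : Finset α} :
    Disjoint B U ∧ B ∪ U = s ↔ B ⊆ s ∧ U = s \ B := by
  constructor
  · rintro ⟨hd, rfl⟩
    exact ⟨subset_union_left, (union_sdiff_cancel_left hd).symm⟩
  · rintro ⟨hB, rfl⟩
    exact ⟨disjoint_sdiff, union_sdiff_of_subset hB⟩

theorem sum_powersetCard_card_sdiff {M : Type*} [AddCommMonoid M] (s : Finset α) (k : ℕ)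
    (f : ℕ → M) : ∑ B ∈ s.powersetCard k, f (s \ B).card = s.card.choose k • f (s.card - k) := by
  rw [sum_congr rfl fun B hB => by
      rw [card_sdiff_of_subset (mem_powersetCard.1 hB).1, (mem_powersetCard.1 hB).2],
    sum_const, card_powersetCard]

end Finset

def IsBarredPermutationOf (s : Finset α) (L : List (Finset α)) : Prop :=
  L.Pairwise Disjoint ∧ (∀ B ∈ L, B.card = 1 ∨ B.card = 2) ∧
    L.foldr (· ∪ ·) ∅ = s

def barredBlocks (s : Finset α) : Finset (Finset α) :=
  s.powersetCard 1 ∪ s.powersetCard 2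

theorem mem_barredBlocks {s B : Finset α} :
    B ∈ barredBlocks s ↔ B ⊆ s ∧ (B.card = 1 ∨ B.card = 2) := by
  simp [barredBlocks, mem_powersetCard, and_or_left]

theorem isBarredPermutationOf_nil_iff {s : Finset α} :
    IsBarredPermutationOf s [] ↔ s = ∅ := by
  simp [IsBarredPermutationOf, eq_comm]

theorem isBarredPermutationOf_cons_iff {s B : Finset α} {T : List (Finset α)} :
    IsBarredPermutationOf s (B :: T) ↔
      B ∈ barredBlocks s ∧ IsBarredPermutationOf (s \ B) T := by
  rw [IsBarredPermutationOf, IsBarredPermutationOf, mem_barredBlocks, List.pairwise_cons,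
    List.forall_mem_cons, List.foldr_cons, ← disjoint_foldr_union_right]
  have := disjoint_and_union_eq_iff (B := B) (U := T.foldr (· ∪ ·) ∅) (s := s)
  tauto

theorem IsBarredPermutationOf.nodup {s : Finset α} {L : List (Finset α)}
    (h : IsBarredPermutationOf s L) : L.Nodup := by
  refine h.1.imp_of_mem fun {B _} hB _ hd => ?_
  rintro rfl
  rcases h.2.1 B hB with h1 | h1 <;> simp [disjoint_self.mp hd] at h1

instance [Finite α] (s : Finset α) : Finite {L // IsBarredPermutationOf s L} :=
  have := Fintype.ofFinite α
  Finite.of_injective (fun L => (⟨L.1, L.2.nodup⟩ : {l : List (Finset α) // l.Nodup}))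
    (Function.Injective.of_comp (f := Subtype.val) Subtype.val_injective)

noncomputable def barredCountOf (s : Finset α) : ℕ :=
  Nat.card {L // IsBarredPermutationOf s L}

theorem barredCount_eq_barredCountOf_univ (n : ℕ) :
    barredCount n = barredCountOf (univ : Finset (Fin n)) :=
  rfl

theorem barredCountOf_empty : barredCountOf (∅ : Finset α) = 1 := by
  have hnil : ∀ L, IsBarredPermutationOf (∅ : Finset α) L ↔ L = [] := by
    rintro (_ | ⟨B, T⟩)
    · simp [isBarredPermutationOf_nil_iff]
    · simp only [isBarredPermutationOf_cons_iff, mem_barredBlocks, subset_empty]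
      grind
  simp [barredCountOf, hnil]

def sigmaBarredPermutationsEquiv {s : Finset α} (hs : s.Nonempty) :
    (Σ B : barredBlocks s, {T // IsBarredPermutationOf (s \ B) T}) ≃
      {L // IsBarredPermutationOf s L} where
  toFun p := ⟨p.1.1 :: p.2.1, isBarredPermutationOf_cons_iff.2 ⟨p.1.2, p.2.2⟩⟩
  invFun
    | ⟨[], h⟩ => absurd (isBarredPermutationOf_nil_iff.1 h) hs.ne_empty
    | ⟨B :: T, h⟩ =>
      ⟨⟨B, (isBarredPermutationOf_cons_iff.1 h).1⟩, ⟨T, (isBarredPermutationOf_cons_iff.1 h).2⟩⟩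
  left_inv _ := rfl
  right_inv := by
    rintro ⟨_ | _, h⟩
    · exact absurd (isBarredPermutationOf_nil_iff.1 h) hs.ne_empty
    · rfl

theorem barredCountOf_eq_sum [Finite α] {s : Finset α} (hs : s.Nonempty) :
    barredCountOf s = ∑ B ∈ barredBlocks s, barredCountOf (s \ B) := by
  rw [barredCountOf, ← Nat.card_congr (sigmaBarredPermutationsEquiv hs), Nat.card_sigma,
    ← sum_coe_sort (barredBlocks s)]
  rfl

def barredSeq : ℕ → ℕ
  | 0 => 1
  | 1 => 1
  | n + 2 => (n + 2) * barredSeq (n + 1) + (n + 2).choose 2 * barredSeq n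

theorem barredCountOf_eq_barredSeq [Finite α] (s : Finset α) :
    barredCountOf s = barredSeq s.card := by
  induction s using Finset.strongInduction with
  | H s ih =>
    obtain rfl | hs := s.eq_empty_or_nonempty
    · simp [barredCountOf_empty, barredSeq]
    obtain ⟨n, hn⟩ : ∃ n, s.card = n + 1 := Nat.exists_eq_add_one.2 hs.card_pos
    have hsub : ∀ B ∈ barredBlocks s, barredCountOf (s \ B) = barredSeq (s \ B).card := by
      intro B hB
      obtain ⟨hBs, hB⟩ := mem_barredBlocks.1 hB
      exact ih _ (sdiff_ssubset hBs (card_pos.1 (by omega)))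
    rw [barredCountOf_eq_sum hs, sum_congr rfl hsub, barredBlocks,
      sum_union (pairwise_disjoint_powersetCard s (by decide)),
      sum_powersetCard_card_sdiff, sum_powersetCard_card_sdiff, hn]
    cases n <;> simp [barredSeq]

theorem pow_sub_pow_add_two {R : Type*} [CommRing R] {p q x y : R} (hx : x ^ 2 = p * x + q)
    (hy : y ^ 2 = p * y + q) (n : ℕ) :
    x ^ (n + 2) - y ^ (n + 2) = p * (x ^ (n + 1) - y ^ (n + 1)) + q * (x ^ n - y ^ n) := by
  linear_combination x ^ n * hx - y ^ n * hy

open Nat in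
theorem cast_barredSeq_eq {K : Type*} [Field K] [CharZero K] {x y : K} (hx : x ^ 2 = x + 1 / 2)
    (hy : y ^ 2 = y + 1 / 2) (hxy : x ≠ y) (n : ℕ) :
    (barredSeq n : K) = n ! * ((x ^ (n + 1) - y ^ (n + 1)) / (x - y)) := by
  have hxy : x - y ≠ 0 := sub_ne_zero.2 hxy
  induction n using Nat.twoStepInduction with
  | zero => simp [barredSeq, hxy]
  | one =>
    rw [hx, hy]
    field_simp
    norm_num [barredSeq]
    ring
  | more n ih ih' =>
    have hrec : (barredSeq (n + 2) : K) =
        (n + 2) * barredSeq (n + 1) + (n + 2) * (n + 1) / 2 * barredSeq n := by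
      push_cast [barredSeq, Nat.cast_choose_two]
      ring
    have hpow := pow_sub_pow_add_two (x := x) (y := y) (p := 1) (q := 1 / 2) (by rw [hx]; ring)
      (by rw [hy]; ring) (n + 1)
    rw [hrec, ih, ih', show n + 2 + 1 = n + 1 + 2 from rfl, hpow]
    push_cast [factorial_succ]
    field_simp
    ring

theorem sq_one_add_sqrt_three_div_two :
    ((1 + Real.sqrt 3) / 2) ^ 2 = (1 + Real.sqrt 3) / 2 + 1 / 2 := by
  linear_combination Real.sq_sqrt (show (0 : ℝ) ≤ 3 by norm_num) / 4

theorem sq_one_sub_sqrt_three_div_two :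
    ((1 - Real.sqrt 3) / 2) ^ 2 = (1 - Real.sqrt 3) / 2 + 1 / 2 := by
  linear_combination Real.sq_sqrt (show (0 : ℝ) ≤ 3 by norm_num) / 4

/-- Binet-type formula:
`b_n = (n!/√3) · ((1+√3)^{n+1} − (1−√3)^{n+1}) / 2^{n+1}` as real numbers. -/
theorem barredCount_binet (n : ℕ) :
    (barredCount n : ℝ) =
      ((n.factorial : ℝ) / Real.sqrt 3) *
        (((1 + Real.sqrt 3) ^ (n + 1) - (1 - Real.sqrt 3) ^ (n + 1)) / 2 ^ (n + 1)) := by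
  have hne : (1 + Real.sqrt 3) / 2 ≠ (1 - Real.sqrt 3) / 2 := fun h => by
    linarith [Real.sqrt_pos.2 (show (0 : ℝ) < 3 by norm_num)]
  rw [barredCount_eq_barredCountOf_univ, barredCountOf_eq_barredSeq, card_univ, Fintype.card_fin,
    cast_barredSeq_eq sq_one_add_sqrt_three_div_two sq_one_sub_sqrt_three_div_two hne,
    div_pow, div_pow]
  field_simp
  ring
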